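/- arXiv:1107.5448 — 6 statements merged into one kernel-verified Lean document; each statement's English description precedes it below -/
import Mathlib

section
/- Fix 0 ≤ t < T, a continuous map r : ℝ^d → ℝ^d, a continuous map q from ℝ^d to symmetric d×d matrices, and h : ℝ^d → ℝ. Let Ū : [0,T] × ℝ^d → ℝ be continuously differentiable and satisfy the classical subsolution properties: Ū_t(s,x) + ⟨∇_x Ū(s,x), r(x)⟩ − (1/2)⟨∇_x Ū(s,x), q(x) ∇_x Ū(s,x)⟩ ≥ 0 for all (s,x) ∈ (0,T) × ℝ^d, and Ū(T,x) ≤ h(x) for all x. Then for every continuously differentiable path φ : [t,T] → ℝ^d with φ(t) = x, one has ∫_t^T [⟨∇_x Ū(s,φ(s)), φ'(s) − r(φ(s))⟩ + (1/2)⟨∇_x Ū(s,φ(s)), q(φ(s)) ∇_x Ū(s,φ(s))⟩] ds ≤ h(φ(T)) − Ū(t,x). -/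
open MeasureTheory intervalIntegral Matrix
open scoped RealInnerProductSpace Topology

/-!
By the chain rule, `s ↦ Ū(s, φ s)` has derivative `Ū_t + ⟪∇Ū, φ'⟫`, and the subsolution
inequality at `(s, φ s)` says exactly that this derivative dominates the integrand. Integrating
over `[t, T]` and using `Ū(T, ·) ≤ h` gives the bound.
-/

open InnerProductSpace ContinuousLinearMap in
theorem HasDerivAt.uncurry_comp_of_continuousAt_partials {E : Type*} [NormedAddCommGroup E]
    [InnerProductSpace ℝ E] [CompleteSpace E] {U Ut : ℝ → E → ℝ} {Ux : ℝ → E → E}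
    {φ : ℝ → E} {v : E} {s : ℝ}
    (hUt : ∀ᶠ p : ℝ × E in 𝓝 (s, φ s), HasDerivAt (U · p.2) (Ut p.1 p.2) p.1)
    (hUx : ∀ᶠ p : ℝ × E in 𝓝 (s, φ s), HasGradientAt (U p.1) (Ux p.1 p.2) p.2)
    (hUtc : ContinuousAt (fun p : ℝ × E => Ut p.1 p.2) (s, φ s))
    (hUxc : ContinuousAt (fun p : ℝ × E => Ux p.1 p.2) (s, φ s))
    (hφ : HasDerivAt φ v s) :
    HasDerivAt (fun τ => U τ (φ τ)) (Ut s (φ s) + ⟪Ux s (φ s), v⟫) s := by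
  have hU : HasFDerivAt (Function.uncurry U)
      ((toSpanSingleton ℝ (Ut s (φ s))).coprod (toDual ℝ E (Ux s (φ s)))) (s, φ s) :=
    (hasStrictFDerivAt_uncurry_coprod (f₁ := fun s x => toSpanSingleton ℝ (Ut s x))
      (f₂ := fun s x => toDual ℝ E (Ux s x)) hUt hUx
      ((toSpanSingletonCLE (𝕜 := ℝ)).continuous.continuousAt.comp hUtc)
      ((toDual ℝ E).continuous.continuousAt.comp hUxc)).hasFDerivAt
  have h := hU.comp_hasDerivAt s ((hasDerivAt_id s).prodMk hφ)
  simp only [coprod_apply, toSpanSingleton_apply, smul_eq_mul, one_mul, toDual_apply_apply] at h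
  exact h

theorem Matrix.continuous_toEuclideanLin_apply {𝕜 m n : Type*} [RCLike 𝕜] [Fintype m]
    [Fintype n] [DecidableEq n] :
    Continuous fun p : Matrix m n 𝕜 × EuclideanSpace 𝕜 n => toEuclideanLin p.1 p.2 := by
  simp only [toLpLin_apply]
  fun_prop

theorem subsolution_path_bound_general
    (d : ℕ) (t T : ℝ) (ht : 0 ≤ t) (htT : t < T)
    (r : EuclideanSpace ℝ (Fin d) → EuclideanSpace ℝ (Fin d)) (hr : Continuous r)
    (q : EuclideanSpace ℝ (Fin d) → Matrix (Fin d) (Fin d) ℝ)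
    (hq : Continuous q)
    (h : EuclideanSpace ℝ (Fin d) → ℝ)
    (Ubar : ℝ → EuclideanSpace ℝ (Fin d) → ℝ)
    (Ut : ℝ → EuclideanSpace ℝ (Fin d) → ℝ)
    (Ux : ℝ → EuclideanSpace ℝ (Fin d) → EuclideanSpace ℝ (Fin d))
    (hUt : ∀ s x, HasDerivAt (fun τ => Ubar τ x) (Ut s x) s)
    (hUx : ∀ s x, HasGradientAt (fun y => Ubar s y) (Ux s x) x)
    (hUtc : Continuous fun p : ℝ × EuclideanSpace ℝ (Fin d) => Ut p.1 p.2)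
    (hUxc : Continuous fun p : ℝ × EuclideanSpace ℝ (Fin d) => Ux p.1 p.2)
    (hsub : ∀ s ∈ Set.Ioo (0 : ℝ) T, ∀ x,
      Ut s x + ⟪Ux s x, r x⟫
        - (1 / 2) * ⟪Ux s x, Matrix.toEuclideanLin (q x) (Ux s x)⟫ ≥ 0)
    (hterm : ∀ x, Ubar T x ≤ h x)
    (x : EuclideanSpace ℝ (Fin d))
    (φ φ' : ℝ → EuclideanSpace ℝ (Fin d))
    (hφ : ∀ s ∈ Set.Icc t T, HasDerivAt φ (φ' s) s)
    (hφ' : ContinuousOn φ' (Set.Icc t T))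
    (hφt : φ t = x) :
    (∫ s in t..T,
        (⟪Ux s (φ s), φ' s - r (φ s)⟫
          + (1 / 2) * ⟪Ux s (φ s), Matrix.toEuclideanLin (q (φ s)) (Ux s (φ s))⟫))
      ≤ h (φ T) - Ubar t x := by
  have hchain : ∀ s ∈ Set.Icc t T, HasDerivAt (fun τ => Ubar τ (φ τ))
      (Ut s (φ s) + ⟪Ux s (φ s), φ' s⟫) s := fun s hs =>
    (hφ s hs).uncurry_comp_of_continuousAt_partials (.of_forall fun p => hUt p.1 p.2)
      (.of_forall fun p => hUx p.1 p.2) hUtc.continuousAt hUxc.continuousAt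
  have hφc : ContinuousOn φ (Set.Icc t T) := fun s hs =>
    (hφ s hs).continuousAt.continuousWithinAt
  have hUxφ : ContinuousOn (fun s => Ux s (φ s)) (Set.Icc t T) :=
    hUxc.comp_continuousOn (f := fun s => (s, φ s)) (continuousOn_id.prodMk hφc)
  have hqUxφ : ContinuousOn (fun s => toEuclideanLin (q (φ s)) (Ux s (φ s))) (Set.Icc t T) :=
    continuous_toEuclideanLin_apply.comp_continuousOn (f := fun s => (q (φ s), Ux s (φ s)))
      ((hq.comp_continuousOn hφc).prodMk hUxφ)
  have hint : IntegrableOn (fun s => ⟪Ux s (φ s), φ' s - r (φ s)⟫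
      + (1 / 2) * ⟪Ux s (φ s), toEuclideanLin (q (φ s)) (Ux s (φ s))⟫) (Set.Icc t T) :=
    ((hUxφ.inner (hφ'.sub (hr.comp_continuousOn hφc))).add
      (continuousOn_const.mul (hUxφ.inner hqUxφ))).integrableOn_compact isCompact_Icc
  calc _ ≤ Ubar T (φ T) - Ubar t (φ t) :=
        integral_le_sub_of_hasDeriv_right_of_le htT.le
          (fun s hs => (hchain s hs).continuousAt.continuousWithinAt)
          (fun s hs => (hchain s (Set.Ioo_subset_Icc_self hs)).hasDerivWithinAt) hint
          fun s hs => by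
            have := hsub s ⟨ht.trans_lt hs.1, hs.2⟩ (φ s)
            rw [inner_sub_right]
            linarith
    _ ≤ h (φ T) - Ubar t x := by rw [hφt]; linarith [hterm (φ T)]

/-- A classical subsolution `Ū` of the HJB equation
`U_t + ⟨∇U, r⟩ − (1/2)⟨∇U, q ∇U⟩ = 0`, `U(T,·) = h`, satisfies along any C¹ path
`φ` with `φ(t) = x` the integral bound
`∫_t^T [⟨∇Ū, φ' − r(φ)⟩ + (1/2)⟨∇Ū, q(φ)∇Ū⟩] ds ≤ h(φ(T)) − Ū(t,x)`. -/
theorem subsolution_path_bound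
    (d : ℕ) (t T : ℝ) (ht : 0 ≤ t) (htT : t < T)
    (r : EuclideanSpace ℝ (Fin d) → EuclideanSpace ℝ (Fin d)) (hr : Continuous r)
    (q : EuclideanSpace ℝ (Fin d) → Matrix (Fin d) (Fin d) ℝ)
    (hq : Continuous q) (hqsymm : ∀ x, (q x).IsSymm)
    (h : EuclideanSpace ℝ (Fin d) → ℝ)
    (Ubar : ℝ → EuclideanSpace ℝ (Fin d) → ℝ)
    (Ut : ℝ → EuclideanSpace ℝ (Fin d) → ℝ)
    (Ux : ℝ → EuclideanSpace ℝ (Fin d) → EuclideanSpace ℝ (Fin d))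
    (hUt : ∀ s x, HasDerivAt (fun τ => Ubar τ x) (Ut s x) s)
    (hUx : ∀ s x, HasGradientAt (fun y => Ubar s y) (Ux s x) x)
    (hUtc : Continuous fun p : ℝ × EuclideanSpace ℝ (Fin d) => Ut p.1 p.2)
    (hUxc : Continuous fun p : ℝ × EuclideanSpace ℝ (Fin d) => Ux p.1 p.2)
    (hsub : ∀ s ∈ Set.Ioo (0 : ℝ) T, ∀ x,
      Ut s x + ⟪Ux s x, r x⟫
        - (1 / 2) * ⟪Ux s x, Matrix.toEuclideanLin (q x) (Ux s x)⟫ ≥ 0)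
    (hterm : ∀ x, Ubar T x ≤ h x)
    (x : EuclideanSpace ℝ (Fin d))
    (φ φ' : ℝ → EuclideanSpace ℝ (Fin d))
    (hφ : ∀ s ∈ Set.Icc t T, HasDerivAt φ (φ' s) s)
    (hφ' : ContinuousOn φ' (Set.Icc t T))
    (hφt : φ t = x) :
    (∫ s in t..T,
        (⟪Ux s (φ s), φ' s - r (φ s)⟫
          + (1 / 2) * ⟪Ux s (φ s), Matrix.toEuclideanLin (q (φ s)) (Ux s (φ s))⟫))
      ≤ h (φ T) - Ubar t x :=
  subsolution_path_bound_general d t T ht htT r hr q hq h Ubar Ut Ux hUt hUx hUtc hUxc hsub hterm x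
    φ φ' hφ hφ' hφt
end

section
/- Fix 0 ≤ t < T, a continuous map r : ℝ^d → ℝ^d, a continuous map q from ℝ^d to symmetric positive definite d×d matrices, and h : ℝ^d → ℝ. Let Ū : [0,T] × ℝ^d → ℝ be continuously differentiable with Ū_t(s,x) + ⟨∇_x Ū(s,x), r(x)⟩ − (1/2)⟨∇_x Ū(s,x), q(x) ∇_x Ū(s,x)⟩ ≥ 0 on (0,T) × ℝ^d and Ū(T,·) ≤ h. Then for every continuously differentiable φ : [t,T] → ℝ^d with φ(t) = x, Ū(t,x) ≤ (1/2)∫_t^T ⟨φ'(s) − r(φ(s)), q(φ(s))⁻¹ (φ'(s) − r(φ(s)))⟩ ds + h(φ(T)). In particular Ū(t,x) ≤ G(t,x), where G(t,x) is the infimum of the right-hand side over all such paths φ. -/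
/-!
Along a C¹ path `φ` the function `s ↦ Ū(s, φ s)` has derivative `Ū_t + ⟪∇Ū, φ'⟫`. Writing
`φ' = r(φ) + v` and completing the square, `⟪p, v⟫ ≥ -½⟪p, q p⟫ - ½⟪v, q⁻¹ v⟫` for a positive
definite `q`, so the subsolution inequality bounds this derivative below by minus the Lagrangian
`½⟪v, q⁻¹ v⟫`. Integrating from `t` to `T` and using `Ū(T, ·) ≤ h` gives the bound on `Ū(t, x)`
for every path, hence also for their infimum.
-/

open MeasureTheory intervalIntegral Matrix
open scoped RealInnerProductSpace

section Positive

variable {E : Type*} [NormedAddCommGroup E] [InnerProductSpace ℝ E]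

theorem LinearMap.IsPositive.neg_inner_le {A : E →ₗ[ℝ] E} (hA : A.IsPositive)
    (p : E) {v w : E} (hw : A w = v) :
    -⟪v, w⟫ ≤ ⟪p, A p⟫ + 2 * ⟪p, v⟫ := by
  have hsq : 0 ≤ ⟪A (p + w), p + w⟫ := by simpa using hA.2 (p + w)
  have hpw : ⟪A p, w⟫ = ⟪p, v⟫ := by rw [hA.isSymmetric, hw]
  simp only [map_add, inner_add_left, inner_add_right] at hsq
  rw [hpw, hw, real_inner_comm p v, real_inner_comm p (A p)] at hsq
  linarith

end Positive

theorem ContinuousOn.toEuclideanLin_apply {X m n : Type*} [TopologicalSpace X] [Fintype n]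
    [DecidableEq n] {M : X → Matrix m n ℝ} {v : X → EuclideanSpace ℝ n} {S : Set X}
    (hM : ContinuousOn M S) (hv : ContinuousOn v S) :
    ContinuousOn (fun x => toEuclideanLin (M x) (v x)) S := by
  have hcont : Continuous fun z : Matrix m n ℝ × EuclideanSpace ℝ n => toEuclideanLin z.1 z.2 :=
    (PiLp.continuous_toLp 2 _).comp
      (continuous_fst.matrix_mulVec ((PiLp.continuous_ofLp 2 _).comp continuous_snd))
  exact hcont.comp_continuousOn (f := fun x => (M x, v x)) (hM.prodMk hv)

theorem Continuous.matrix_inv_of_isUnit {X n : Type*} [TopologicalSpace X] [Fintype n]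
    [DecidableEq n] {A : X → Matrix n n ℝ} (hA : Continuous A) (hdet : ∀ x, IsUnit (A x).det) :
    Continuous fun x => (A x)⁻¹ :=
  continuous_iff_continuousAt.2 fun x =>
    (continuousAt_matrix_inv _ (NormedRing.inverse_continuousAt (hdet x).unit)).comp
      hA.continuousAt

section HJB

variable {n : Type*} [Fintype n] [DecidableEq n]
  (r : EuclideanSpace ℝ n → EuclideanSpace ℝ n) (q : EuclideanSpace ℝ n → Matrix n n ℝ)

noncomputable def hamiltonian (x p : EuclideanSpace ℝ n) : ℝ :=
  ⟪p, r x⟫ - 1 / 2 * ⟪p, toEuclideanLin (q x) p⟫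

noncomputable def lagrangian (x v : EuclideanSpace ℝ n) : ℝ :=
  1 / 2 * ⟪v - r x, toEuclideanLin (q x)⁻¹ (v - r x)⟫

variable {r q}

theorem hamiltonian_le_inner_add_lagrangian {x : EuclideanSpace ℝ n} (hq : (q x).PosDef)
    (p v : EuclideanSpace ℝ n) :
    hamiltonian r q x p ≤ ⟪p, v⟫ + lagrangian r q x v := by
  have hw : toEuclideanLin (q x) (toEuclideanLin (q x)⁻¹ (v - r x)) = v - r x := by
    simp [toLpLin_apply, mulVec_mulVec, mul_nonsing_inv _ hq.det_pos.ne'.isUnit]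
  have hsq := (isPositive_toEuclideanLin_iff.2 hq.posSemidef).neg_inner_le p hw
  rw [inner_sub_right] at hsq
  unfold hamiltonian lagrangian
  linarith

theorem ContinuousOn.lagrangian {X : Type*} [TopologicalSpace X] {S : Set X}
    (hr : Continuous r) (hq : Continuous q) (hqpos : ∀ x, (q x).PosDef)
    {γ γ' : X → EuclideanSpace ℝ n} (hγ : ContinuousOn γ S) (hγ' : ContinuousOn γ' S) :
    ContinuousOn (fun s => lagrangian r q (γ s) (γ' s)) S := by
  have hv : ContinuousOn (fun s => γ' s - r (γ s)) S := hγ'.sub (hr.comp_continuousOn hγ)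
  have hqinv : ContinuousOn (fun s => (q (γ s))⁻¹) S :=
    (hq.matrix_inv_of_isUnit fun x => (hqpos x).det_pos.ne'.isUnit).comp_continuousOn hγ
  exact continuousOn_const.mul (hv.inner (hqinv.toEuclideanLin_apply hv))

end HJB

section Curve

variable {E : Type*} [NormedAddCommGroup E] [InnerProductSpace ℝ E] [CompleteSpace E]

theorem HasDerivAt.comp_curve_of_continuous_partials {U Ut : ℝ → E → ℝ} {Ux : ℝ → E → E}
    (hUt : ∀ s x, HasDerivAt (fun τ => U τ x) (Ut s x) s)
    (hUx : ∀ s x, HasGradientAt (fun y => U s y) (Ux s x) x)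
    (hUtc : Continuous fun p : ℝ × E => Ut p.1 p.2)
    (hUxc : Continuous fun p : ℝ × E => Ux p.1 p.2)
    {φ : ℝ → E} {v : E} {s : ℝ} (hφ : HasDerivAt φ v s) :
    HasDerivAt (fun τ => U τ (φ τ)) (Ut s (φ s) + ⟪Ux s (φ s), v⟫) s := by
  have hU := hasStrictFDerivAt_uncurry_coprod (u := (s, φ s)) (f := U)
    (f₁ := fun s x => ContinuousLinearMap.toSpanSingleton ℝ (Ut s x))
    (f₂ := fun s x => InnerProductSpace.toDual ℝ E (Ux s x))
    (.of_forall fun z => (hUt z.1 z.2).hasFDerivAt)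
    (.of_forall fun z => (hUx z.1 z.2).hasFDerivAt)
    (ContinuousLinearMap.toSpanSingletonCLE.continuous.comp hUtc).continuousAt
    ((InnerProductSpace.toDual ℝ E).continuous.comp hUxc).continuousAt
  refine (hU.hasFDerivAt.comp_hasDerivAt s ((hasDerivAt_id s).prodMk hφ)).congr_deriv ?_
  simp [Function.HasUncurry.uncurry, InnerProductSpace.toDual_apply_apply]

theorem sub_le_integral_of_deriv_along_curve {U Ut : ℝ → E → ℝ} {Ux : ℝ → E → E}
    (hUt : ∀ s x, HasDerivAt (fun τ => U τ x) (Ut s x) s)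
    (hUx : ∀ s x, HasGradientAt (fun y => U s y) (Ux s x) x)
    (hUtc : Continuous fun p : ℝ × E => Ut p.1 p.2)
    (hUxc : Continuous fun p : ℝ × E => Ux p.1 p.2)
    {t T : ℝ} (htT : t ≤ T) {φ φ' : ℝ → E} (hφ : ∀ s ∈ Set.Icc t T, HasDerivAt φ (φ' s) s)
    {L : ℝ → ℝ} (hL : IntegrableOn L (Set.Icc t T))
    (hUL : ∀ s ∈ Set.Ioo t T, -L s ≤ Ut s (φ s) + ⟪Ux s (φ s), φ' s⟫) :
    U t (φ t) - U T (φ T) ≤ ∫ s in t..T, L s := by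
  have hderiv : ∀ s ∈ Set.Icc t T, HasDerivAt (fun τ => -U τ (φ τ))
      (-(Ut s (φ s) + ⟪Ux s (φ s), φ' s⟫)) s := fun s hs =>
    ((hφ s hs).comp_curve_of_continuous_partials hUt hUx hUtc hUxc).neg
  have hFTC := sub_le_integral_of_hasDeriv_right_of_le htT
    (fun s hs => (hderiv s hs).continuousAt.continuousWithinAt)
    (fun s hs => (hderiv s (Set.Ioo_subset_Icc_self hs)).hasDerivWithinAt) hL
    (fun s hs => neg_le.1 (hUL s hs))
  linarith

end Curve

/-- A classical subsolution `Ū` of the HJB equation is bounded above by the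
action functional plus terminal cost along every C¹ path starting at `x`;
in particular `Ū(t,x) ≤ G(t,x)`, the value of the variational problem. -/
theorem subsolution_le_value
    (d : ℕ) (t T : ℝ) (ht : 0 ≤ t) (htT : t < T)
    (r : EuclideanSpace ℝ (Fin d) → EuclideanSpace ℝ (Fin d)) (hr : Continuous r)
    (q : EuclideanSpace ℝ (Fin d) → Matrix (Fin d) (Fin d) ℝ)
    (hq : Continuous q) (hqpos : ∀ x, (q x).PosDef)
    (h : EuclideanSpace ℝ (Fin d) → ℝ)
    (Ubar : ℝ → EuclideanSpace ℝ (Fin d) → ℝ)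
    (Ut : ℝ → EuclideanSpace ℝ (Fin d) → ℝ)
    (Ux : ℝ → EuclideanSpace ℝ (Fin d) → EuclideanSpace ℝ (Fin d))
    (hUt : ∀ s x, HasDerivAt (fun τ => Ubar τ x) (Ut s x) s)
    (hUx : ∀ s x, HasGradientAt (fun y => Ubar s y) (Ux s x) x)
    (hUtc : Continuous fun p : ℝ × EuclideanSpace ℝ (Fin d) => Ut p.1 p.2)
    (hUxc : Continuous fun p : ℝ × EuclideanSpace ℝ (Fin d) => Ux p.1 p.2)
    (hsub : ∀ s ∈ Set.Ioo (0 : ℝ) T, ∀ x,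
      Ut s x + ⟪Ux s x, r x⟫
        - (1 / 2) * ⟪Ux s x, Matrix.toEuclideanLin (q x) (Ux s x)⟫ ≥ 0)
    (hterm : ∀ x, Ubar T x ≤ h x)
    (x : EuclideanSpace ℝ (Fin d)) :
    (∀ φ φ' : ℝ → EuclideanSpace ℝ (Fin d),
      (∀ s ∈ Set.Icc t T, HasDerivAt φ (φ' s) s) →
      ContinuousOn φ' (Set.Icc t T) → φ t = x →
      Ubar t x ≤ (1 / 2) * (∫ s in t..T,
          ⟪φ' s - r (φ s),
            Matrix.toEuclideanLin ((q (φ s))⁻¹) (φ' s - r (φ s))⟫) + h (φ T)) ∧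
    (∀ g : ℝ, IsGLB {v : ℝ | ∃ φ φ' : ℝ → EuclideanSpace ℝ (Fin d),
        (∀ s ∈ Set.Icc t T, HasDerivAt φ (φ' s) s) ∧
        ContinuousOn φ' (Set.Icc t T) ∧ φ t = x ∧
        v = (1 / 2) * (∫ s in t..T,
            ⟪φ' s - r (φ s),
              Matrix.toEuclideanLin ((q (φ s))⁻¹) (φ' s - r (φ s))⟫) + h (φ T)} g →
      Ubar t x ≤ g) := by
  have action_bound : ∀ φ φ' : ℝ → EuclideanSpace ℝ (Fin d),
      (∀ s ∈ Set.Icc t T, HasDerivAt φ (φ' s) s) →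
      ContinuousOn φ' (Set.Icc t T) → φ t = x →
      Ubar t x ≤ (1 / 2) * (∫ s in t..T,
          ⟪φ' s - r (φ s),
            Matrix.toEuclideanLin ((q (φ s))⁻¹) (φ' s - r (φ s))⟫) + h (φ T) := by
    rintro φ φ' hφ hφ' rfl
    have hφc : ContinuousOn φ (Set.Icc t T) := fun s hs =>
      (hφ s hs).continuousAt.continuousWithinAt
    have hHJB : ∀ s ∈ Set.Ioo t T,
        -lagrangian r q (φ s) (φ' s) ≤ Ut s (φ s) + ⟪Ux s (φ s), φ' s⟫ := fun s hs => by
      have hdual := hamiltonian_le_inner_add_lagrangian (r := r) (hqpos (φ s)) (Ux s (φ s)) (φ' s)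
      have hsubs := hsub s ⟨ht.trans_lt hs.1, hs.2⟩ (φ s)
      unfold hamiltonian at hdual
      linarith
    have hbound := sub_le_integral_of_deriv_along_curve hUt hUx hUtc hUxc htT.le hφ
      ((hφc.lagrangian hr hq hqpos hφ').integrableOn_Icc) hHJB
    simp only [lagrangian, intervalIntegral.integral_const_mul] at hbound
    linarith [hterm (φ T)]
  refine ⟨action_bound, fun g hg => hg.2 ?_⟩
  rintro _ ⟨φ, φ', hφ, hφ', hφt, rfl⟩
  exact action_bound φ φ' hφ hφ' hφt
end

section
/- Fix 0 ≤ t < T, a continuous map r : ℝ^d → ℝ^d, a continuous map q from ℝ^d to symmetric positive definite d×d matrices, and h : ℝ^d → ℝ. Let Ū : [0,T] × ℝ^d → ℝ be continuously differentiable with Ū_t(s,x) + ⟨∇_x Ū(s,x), r(x)⟩ − (1/2)⟨∇_x Ū(s,x), q(x)∇_x Ū(s,x)⟩ ≥ 0 on (0,T) × ℝ^d and Ū(T,·) ≤ h. For a continuously differentiable path φ : [t,T] → ℝ^d with φ(t) = x, write S_{tT}(φ) = (1/2)∫_t^T ⟨φ'(s) − r(φ(s)), q(φ(s))⁻¹(φ'(s)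 − r(φ(s)))⟩ ds. Then for every such φ, S_{tT}(φ) − ∫_t^T ⟨φ'(s) − r(φ(s)), ∇_x Ū(s,φ(s))⟩ ds − (1/2)∫_t^T ⟨∇_x Ū(s,φ(s)), q(φ(s))∇_x Ū(s,φ(s))⟩ ds + 2h(φ(T)) ≥ S_{tT}(φ) + h(φ(T)) + Ū(t,x). Consequently the infimum over all such φ of the left-hand side is at least G(t,x) + Ū(t,x), where G(t,x) = inf_{φ, φ(t)=x} [S_{tT}(φ) + h(φ(T))]. -/
open MeasureTheory intervalIntegral Matrix
open scoped RealInnerProductSpace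
open InnerProductSpace Set

/-!
Along a C¹ path `φ` the chain rule gives `d/ds Ū(s, φ s) = Ū_t + ⟪∇Ū, φ'⟫`; subtracting the
cross terms `⟪φ' - r, ∇Ū⟫ + ½ ⟪∇Ū, q ∇Ū⟫` leaves `Ū_t + H̄(φ, ∇Ū) ≥ 0`. Integrating over `[t, T]`
bounds the cross terms by `Ū(T, φ T) - Ū(t, x) ≤ h(φ T) - Ū(t, x)`, which is the pathwise bound;
the bound on infima follows path by path. The chain rule applies because `Ū` has continuous
partial derivatives, hence is jointly differentiable.
-/

section ChainRule

variable {E : Type*} [NormedAddCommGroup E] [InnerProductSpace ℝ E] [CompleteSpace E]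
  {F Ft : ℝ → E → ℝ} {Fx : ℝ → E → E}

theorem hasStrictFDerivAt_uncurry_of_hasDerivAt_of_hasGradientAt
    (hFt : ∀ s y, HasDerivAt (F · y) (Ft s y) s)
    (hFx : ∀ s y, HasGradientAt (F s ·) (Fx s y) y)
    {p : ℝ × E} (hFtc : ContinuousAt (fun p : ℝ × E => Ft p.1 p.2) p)
    (hFxc : ContinuousAt (fun p : ℝ × E => Fx p.1 p.2) p) :
    HasStrictFDerivAt (fun p : ℝ × E => F p.1 p.2)
      ((ContinuousLinearMap.toSpanSingleton ℝ (Ft p.1 p.2)).coprod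
        (toDual ℝ E (Fx p.1 p.2) : E →L[ℝ] ℝ)) p :=
  hasStrictFDerivAt_uncurry_coprod
    (f₁ := fun s y => ContinuousLinearMap.toSpanSingleton ℝ (Ft s y))
    (f₂ := fun s y => (toDual ℝ E (Fx s y) : E →L[ℝ] ℝ))
    (.of_forall fun v => (hFt v.1 v.2).hasFDerivAt)
    (.of_forall fun v => (hFx v.1 v.2).hasFDerivAt)
    ((ContinuousLinearMap.toSpanSingletonCLE).continuous.continuousAt.comp hFtc)
    ((toDual ℝ E).continuous.continuousAt.comp hFxc)

theorem hasDerivAt_comp_path_of_hasDerivAt_of_hasGradientAt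
    (hFt : ∀ s y, HasDerivAt (F · y) (Ft s y) s)
    (hFx : ∀ s y, HasGradientAt (F s ·) (Fx s y) y)
    (hFtc : Continuous fun p : ℝ × E => Ft p.1 p.2)
    (hFxc : Continuous fun p : ℝ × E => Fx p.1 p.2)
    {φ : ℝ → E} {v : E} {s : ℝ} (hφ : HasDerivAt φ v s) :
    HasDerivAt (fun u => F u (φ u)) (Ft s (φ s) + ⟪Fx s (φ s), v⟫) s := by
  have := (hasStrictFDerivAt_uncurry_of_hasDerivAt_of_hasGradientAt hFt hFx
    hFtc.continuousAt hFxc.continuousAt).hasFDerivAt.comp_hasDerivAt s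
    ((hasDerivAt_id s).prodMk hφ)
  simpa [Function.comp_def] using this

theorem integral_hasDerivAt_comp_path_eq_sub
    (hFt : ∀ s y, HasDerivAt (F · y) (Ft s y) s)
    (hFx : ∀ s y, HasGradientAt (F s ·) (Fx s y) y)
    (hFtc : Continuous fun p : ℝ × E => Ft p.1 p.2)
    (hFxc : Continuous fun p : ℝ × E => Fx p.1 p.2)
    {t T : ℝ} (htT : t ≤ T) {φ φ' : ℝ → E} (hφ : ∀ s ∈ Icc t T, HasDerivAt φ (φ' s) s)
    (hφ' : ContinuousOn φ' (Icc t T)) :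
    ∫ s in t..T, (Ft s (φ s) + ⟪Fx s (φ s), φ' s⟫) = F T (φ T) - F t (φ t) := by
  have hpath : ContinuousOn (fun s => (s, φ s)) (Icc t T) :=
    continuousOn_id.prodMk fun s hs => (hφ s hs).continuousAt.continuousWithinAt
  have hint : IntervalIntegrable (fun s => Ft s (φ s) + ⟪Fx s (φ s), φ' s⟫) volume t T :=
    ((hFtc.comp_continuousOn hpath).add ((hFxc.comp_continuousOn hpath).inner hφ'))
      |>.intervalIntegrable_of_Icc htT
  refine integral_eq_sub_of_hasDerivAt (f := fun u => F u (φ u)) (fun s hs => ?_) hint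
  rw [uIcc_of_le htT] at hs
  exact hasDerivAt_comp_path_of_hasDerivAt_of_hasGradientAt hFt hFx hFtc hFxc (hφ s hs)

end ChainRule

theorem ContinuousOn.inner_toEuclideanLin {α n : Type*} [TopologicalSpace α] [Fintype n]
    [DecidableEq n] {A : α → Matrix n n ℝ} {v w : α → EuclideanSpace ℝ n} {s : Set α}
    (hA : ContinuousOn A s) (hv : ContinuousOn v s) (hw : ContinuousOn w s) :
    ContinuousOn (fun a => ⟪v a, toEuclideanLin (A a) (w a)⟫) s := by
  have hCLM : Continuous (toEuclideanCLM (n := n) (𝕜 := ℝ)) :=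
    LinearMap.continuous_of_finiteDimensional
      (toEuclideanCLM (n := n) (𝕜 := ℝ)).toAlgEquiv.toLinearMap
  exact hv.inner ((hCLM.comp_continuousOn hA).clm_apply hw)

theorem IsGLB.add_le_of_forall_exists_add_le {s s' : Set ℝ} {c l m : ℝ}
    (hs : IsGLB s l) (hs' : IsGLB s' m) (h : ∀ v ∈ s, ∃ w ∈ s', w + c ≤ v) : m + c ≤ l :=
  hs.2 fun v hv => by
    obtain ⟨w, hw, hwv⟩ := h v hv
    linarith [hs'.1 hw]

theorem integral_inner_add_half_quadratic_le_of_subsolution {n : Type*} [Fintype n]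
    [DecidableEq n] {r : EuclideanSpace ℝ n → EuclideanSpace ℝ n} (hr : Continuous r)
    {q : EuclideanSpace ℝ n → Matrix n n ℝ} (hq : Continuous q)
    {U Ut : ℝ → EuclideanSpace ℝ n → ℝ} {Ux : ℝ → EuclideanSpace ℝ n → EuclideanSpace ℝ n}
    (hUt : ∀ s y, HasDerivAt (U · y) (Ut s y) s)
    (hUx : ∀ s y, HasGradientAt (U s ·) (Ux s y) y)
    (hUtc : Continuous fun p : ℝ × EuclideanSpace ℝ n => Ut p.1 p.2)
    (hUxc : Continuous fun p : ℝ × EuclideanSpace ℝ n => Ux p.1 p.2)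
    {t T : ℝ} (htT : t ≤ T)
    (hsub : ∀ s ∈ Ioo t T, ∀ y,
      0 ≤ Ut s y + ⟪Ux s y, r y⟫ - 1 / 2 * ⟪Ux s y, toEuclideanLin (q y) (Ux s y)⟫)
    {φ φ' : ℝ → EuclideanSpace ℝ n} (hφ : ∀ s ∈ Icc t T, HasDerivAt φ (φ' s) s)
    (hφ' : ContinuousOn φ' (Icc t T)) :
    (∫ s in t..T, ⟪φ' s - r (φ s), Ux s (φ s)⟫)
        + 1 / 2 * ∫ s in t..T, ⟪Ux s (φ s), toEuclideanLin (q (φ s)) (Ux s (φ s))⟫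
      ≤ U T (φ T) - U t (φ t) := by
  have hφc : ContinuousOn φ (Icc t T) := fun s hs => (hφ s hs).continuousAt.continuousWithinAt
  have hpath : ContinuousOn (fun s => (s, φ s)) (Icc t T) := continuousOn_id.prodMk hφc
  have hUxφ : ContinuousOn (fun s => Ux s (φ s)) (Icc t T) := hUxc.comp_continuousOn hpath
  have htotal : IntervalIntegrable (fun s => Ut s (φ s) + ⟪Ux s (φ s), φ' s⟫) volume t T :=
    ((hUtc.comp_continuousOn hpath).add (hUxφ.inner hφ')).intervalIntegrable_of_Icc htT
  have hdrift : IntervalIntegrable (fun s => ⟪φ' s - r (φ s), Ux s (φ s)⟫) volume t T :=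
    ((hφ'.sub (hr.comp_continuousOn hφc)).inner hUxφ).intervalIntegrable_of_Icc htT
  have hquad : IntervalIntegrable
      (fun s => ⟪Ux s (φ s), toEuclideanLin (q (φ s)) (Ux s (φ s))⟫) volume t T :=
    ((hq.comp_continuousOn hφc).inner_toEuclideanLin hUxφ hUxφ).intervalIntegrable_of_Icc htT
  have hnonneg : 0 ≤ ∫ s in t..T, ((Ut s (φ s) + ⟪Ux s (φ s), φ' s⟫)
      - ⟪φ' s - r (φ s), Ux s (φ s)⟫
      - 1 / 2 * ⟪Ux s (φ s), toEuclideanLin (q (φ s)) (Ux s (φ s))⟫) := by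
    rw [integral_of_le htT, integral_Ioc_eq_integral_Ioo]
    refine setIntegral_nonneg measurableSet_Ioo fun s hs => ?_
    rw [inner_sub_left]
    linarith [hsub s hs (φ s), real_inner_comm (φ' s) (Ux s (φ s)),
      real_inner_comm (r (φ s)) (Ux s (φ s))]
  rw [integral_sub (htotal.sub hdrift) (hquad.const_mul _), integral_sub htotal hdrift,
    intervalIntegral.integral_const_mul,
    integral_hasDerivAt_comp_path_eq_sub hUt hUx hUtc hUxc htT hφ hφ'] at hnonneg
  linarith

theorem importance_sampling_variational_bound_general
    (d : ℕ) (t T : ℝ) (ht : 0 ≤ t) (htT : t < T)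
    (r : EuclideanSpace ℝ (Fin d) → EuclideanSpace ℝ (Fin d)) (hr : Continuous r)
    (q : EuclideanSpace ℝ (Fin d) → Matrix (Fin d) (Fin d) ℝ)
    (hq : Continuous q)
    (h : EuclideanSpace ℝ (Fin d) → ℝ)
    (Ubar : ℝ → EuclideanSpace ℝ (Fin d) → ℝ)
    (Ut : ℝ → EuclideanSpace ℝ (Fin d) → ℝ)
    (Ux : ℝ → EuclideanSpace ℝ (Fin d) → EuclideanSpace ℝ (Fin d))
    (hUt : ∀ s x, HasDerivAt (fun τ => Ubar τ x) (Ut s x) s)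
    (hUx : ∀ s x, HasGradientAt (fun y => Ubar s y) (Ux s x) x)
    (hUtc : Continuous fun p : ℝ × EuclideanSpace ℝ (Fin d) => Ut p.1 p.2)
    (hUxc : Continuous fun p : ℝ × EuclideanSpace ℝ (Fin d) => Ux p.1 p.2)
    (hsub : ∀ s ∈ Set.Ioo (0 : ℝ) T, ∀ x,
      Ut s x + ⟪Ux s x, r x⟫
        - (1 / 2) * ⟪Ux s x, Matrix.toEuclideanLin (q x) (Ux s x)⟫ ≥ 0)
    (hterm : ∀ x, Ubar T x ≤ h x)
    (x : EuclideanSpace ℝ (Fin d))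
    -- the action functional S
    (S : (ℝ → EuclideanSpace ℝ (Fin d)) → (ℝ → EuclideanSpace ℝ (Fin d)) → ℝ) :
    (∀ φ φ' : ℝ → EuclideanSpace ℝ (Fin d),
      (∀ s ∈ Set.Icc t T, HasDerivAt φ (φ' s) s) →
      ContinuousOn φ' (Set.Icc t T) → φ t = x →
      S φ φ' - (∫ s in t..T, ⟪φ' s - r (φ s), Ux s (φ s)⟫)
          - (1 / 2) * (∫ s in t..T,
              ⟪Ux s (φ s), Matrix.toEuclideanLin (q (φ s)) (Ux s (φ s))⟫)
          + 2 * h (φ T)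
        ≥ S φ φ' + h (φ T) + Ubar t x) ∧
    (∀ gL gG : ℝ,
      IsGLB {v : ℝ | ∃ φ φ' : ℝ → EuclideanSpace ℝ (Fin d),
          (∀ s ∈ Set.Icc t T, HasDerivAt φ (φ' s) s) ∧
          ContinuousOn φ' (Set.Icc t T) ∧ φ t = x ∧
          v = S φ φ' - (∫ s in t..T, ⟪φ' s - r (φ s), Ux s (φ s)⟫)
              - (1 / 2) * (∫ s in t..T,
                  ⟪Ux s (φ s), Matrix.toEuclideanLin (q (φ s)) (Ux s (φ s))⟫)
              + 2 * h (φ T)} gL →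
      IsGLB {v : ℝ | ∃ φ φ' : ℝ → EuclideanSpace ℝ (Fin d),
          (∀ s ∈ Set.Icc t T, HasDerivAt φ (φ' s) s) ∧
          ContinuousOn φ' (Set.Icc t T) ∧ φ t = x ∧
          v = S φ φ' + h (φ T)} gG →
      gL ≥ gG + Ubar t x) := by
  refine (fun bound => ⟨bound, fun gL gG hL hG => hL.add_le_of_forall_exists_add_le hG ?_⟩)
    fun φ φ' hφ hφ' hφt => ?_
  · have hcost := integral_inner_add_half_quadratic_le_of_subsolution hr hq hUt hUx hUtc hUxc
      htT.le (fun s hs => hsub s ⟨ht.trans_lt hs.1, hs.2⟩) hφ hφ'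
    rw [hφt] at hcost
    linarith [hterm (φ T)]
  · rintro v ⟨φ, φ', hφ, hφ', hφt, rfl⟩
    exact ⟨_, ⟨φ, φ', hφ, hφ', hφt, rfl⟩, bound φ φ' hφ hφ' hφt⟩

/-- The deterministic limit variational estimate: for a classical subsolution `Ū`,
along every C¹ path `φ` with `φ(t) = x`,
`S(φ) − ∫⟨φ'−r, ∇Ū⟩ − (1/2)∫⟨∇Ū, q∇Ū⟩ + 2h(φ(T)) ≥ S(φ) + h(φ(T)) + Ū(t,x)`,
whence the infimum of the left-hand side is at least `G(t,x) + Ū(t,x)`. -/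
theorem importance_sampling_variational_bound
    (d : ℕ) (t T : ℝ) (ht : 0 ≤ t) (htT : t < T)
    (r : EuclideanSpace ℝ (Fin d) → EuclideanSpace ℝ (Fin d)) (hr : Continuous r)
    (q : EuclideanSpace ℝ (Fin d) → Matrix (Fin d) (Fin d) ℝ)
    (hq : Continuous q) (hqpos : ∀ x, (q x).PosDef)
    (h : EuclideanSpace ℝ (Fin d) → ℝ)
    (Ubar : ℝ → EuclideanSpace ℝ (Fin d) → ℝ)
    (Ut : ℝ → EuclideanSpace ℝ (Fin d) → ℝ)
    (Ux : ℝ → EuclideanSpace ℝ (Fin d) → EuclideanSpace ℝ (Fin d))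
    (hUt : ∀ s x, HasDerivAt (fun τ => Ubar τ x) (Ut s x) s)
    (hUx : ∀ s x, HasGradientAt (fun y => Ubar s y) (Ux s x) x)
    (hUtc : Continuous fun p : ℝ × EuclideanSpace ℝ (Fin d) => Ut p.1 p.2)
    (hUxc : Continuous fun p : ℝ × EuclideanSpace ℝ (Fin d) => Ux p.1 p.2)
    (hsub : ∀ s ∈ Set.Ioo (0 : ℝ) T, ∀ x,
      Ut s x + ⟪Ux s x, r x⟫
        - (1 / 2) * ⟪Ux s x, Matrix.toEuclideanLin (q x) (Ux s x)⟫ ≥ 0)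
    (hterm : ∀ x, Ubar T x ≤ h x)
    (x : EuclideanSpace ℝ (Fin d))
    -- the action functional S
    (S : (ℝ → EuclideanSpace ℝ (Fin d)) → (ℝ → EuclideanSpace ℝ (Fin d)) → ℝ)
    (hS : ∀ φ φ', S φ φ' = (1 / 2) * ∫ s in t..T,
        ⟪φ' s - r (φ s), Matrix.toEuclideanLin ((q (φ s))⁻¹) (φ' s - r (φ s))⟫) :
    (∀ φ φ' : ℝ → EuclideanSpace ℝ (Fin d),
      (∀ s ∈ Set.Icc t T, HasDerivAt φ (φ' s) s) →
      ContinuousOn φ' (Set.Icc t T) → φ t = x →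
      S φ φ' - (∫ s in t..T, ⟪φ' s - r (φ s), Ux s (φ s)⟫)
          - (1 / 2) * (∫ s in t..T,
              ⟪Ux s (φ s), Matrix.toEuclideanLin (q (φ s)) (Ux s (φ s))⟫)
          + 2 * h (φ T)
        ≥ S φ φ' + h (φ T) + Ubar t x) ∧
    (∀ gL gG : ℝ,
      IsGLB {v : ℝ | ∃ φ φ' : ℝ → EuclideanSpace ℝ (Fin d),
          (∀ s ∈ Set.Icc t T, HasDerivAt φ (φ' s) s) ∧
          ContinuousOn φ' (Set.Icc t T) ∧ φ t = x ∧
          v = S φ φ' - (∫ s in t..T, ⟪φ' s - r (φ s), Ux s (φ s)⟫)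
              - (1 / 2) * (∫ s in t..T,
                  ⟪Ux s (φ s), Matrix.toEuclideanLin (q (φ s)) (Ux s (φ s))⟫)
              + 2 * h (φ T)} gL →
      IsGLB {v : ℝ | ∃ φ φ' : ℝ → EuclideanSpace ℝ (Fin d),
          (∀ s ∈ Set.Icc t T, HasDerivAt φ (φ' s) s) ∧
          ContinuousOn φ' (Set.Icc t T) ∧ φ t = x ∧
          v = S φ φ' + h (φ T)} gG →
      gL ≥ gG + Ubar t x) :=
  importance_sampling_variational_bound_general d t T ht htT r hr q hq h Ubar Ut Ux hUt hUx hUtc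
    hUxc hsub hterm x S
end

section
/- Let D > 0, λ > 0 and let Q : ℝ → ℝ be twice continuously differentiable, λ-periodic, and not constant on [0,λ]. With L = ∫_0^λ e^{−Q(y)/D} dy, L̂ = ∫_0^λ e^{Q(y)/D} dy, μ(dy) = e^{−Q(y)/D} dy / L, and 1 + χ'(y) = (λ/L̂) e^{Q(y)/D}, the averaged dispersion Φ̄ = √(2D) ∫_0^λ (1 + χ'(y)) μ(dy) satisfies Φ̄² < q, where q = 2D ∫_0^λ (1 + χ'(y))² μ(dy) = 2Dλ²/(L L̂). Hence the choice Φ(x) = ∫(1+∂χ/∂y)σ dμ violates the requirement Φ(x)Φ(x)ᵀ = q(x). -/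
/-!
The corrector makes `(1 + χ') e^{-Q/D}` the constant `λ/L̂`, so the mean and the mean square of
`1 + χ'` under `μ` both equal `m = λ²/(L L̂)`; thus `q = 2Dm` and `Φ̄² = 2Dm²`. Finally `m < 1` is
the Cauchy–Schwarz inequality `λ² ≤ ∫ e^{-Q/D} · ∫ e^{Q/D}`, strict because `e^{Q/D}` is not
constant.
-/

open Set

lemma inv_sub_tangent_eq {x c : ℝ} (hx : x ≠ 0) (hc : c ≠ 0) :
    x⁻¹ - (2 / c - x / c ^ 2) = (x - c) ^ 2 / (x * c ^ 2) := by
  field_simp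
  ring

lemma tangent_le_inv {x c : ℝ} (hx : 0 < x) (hc : 0 < c) : 2 / c - x / c ^ 2 ≤ x⁻¹ := by
  have := inv_sub_tangent_eq hx.ne' hc.ne'
  have : 0 ≤ (x - c) ^ 2 / (x * c ^ 2) := by positivity
  linarith

lemma tangent_lt_inv {x c : ℝ} (hx : 0 < x) (hc : 0 < c) (hxc : x ≠ c) :
    2 / c - x / c ^ 2 < x⁻¹ := by
  have := inv_sub_tangent_eq hx.ne' hc.ne'
  have : 0 < (x - c) ^ 2 / (x * c ^ 2) := by
    have := sub_ne_zero.mpr hxc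
    positivity
  linarith

/-- The pointwise bound `1/g ≥ 2/c - g/c²` (tangent line of `x ↦ 1/x` at the mean `c` of `g`)
integrates to the claim, strictly because `g` differs from `c` somewhere. -/
theorem sq_sub_lt_integral_mul_integral_inv {g : ℝ → ℝ} {a b : ℝ} (hab : a < b)
    (hg : ContinuousOn g (Icc a b)) (hpos : ∀ x ∈ Icc a b, 0 < g x)
    (hnc : ∃ x ∈ Icc a b, ∃ y ∈ Icc a b, g x ≠ g y) :
    (b - a) ^ 2 < (∫ x in a..b, g x) * ∫ x in a..b, (g x)⁻¹ := by
  set I := ∫ x in a..b, g x with hI_def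
  have ha : a ∈ Icc a b := left_mem_Icc.2 hab.le
  have hI : 0 < I := intervalIntegral.integral_pos hab hg
    (fun x hx => (hpos x (Ioc_subset_Icc_self hx)).le) ⟨a, ha, hpos a ha⟩
  have hba : 0 < b - a := sub_pos.2 hab
  set c := I / (b - a)
  have hc : 0 < c := div_pos hI hba
  obtain ⟨z, hz, hzc⟩ : ∃ z ∈ Icc a b, g z ≠ c := by
    obtain ⟨x, hx, y, hy, hxy⟩ := hnc
    by_cases hxc : g x = c
    · exact ⟨y, hy, fun hyc => hxy (hxc.trans hyc.symm)⟩
    · exact ⟨x, hx, hxc⟩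
  have htangent : ContinuousOn (fun x => 2 / c - g x / c ^ 2) (Icc a b) :=
    continuousOn_const.sub (hg.div_const _)
  have hlt := intervalIntegral.integral_lt_integral_of_continuousOn_of_le_of_exists_lt hab
    htangent (hg.inv₀ fun x hx => (hpos x hx).ne')
    (fun x hx => tangent_le_inv (hpos x (Ioc_subset_Icc_self hx)) hc)
    ⟨z, hz, tangent_lt_inv (hpos z hz) hc hzc⟩
  have hmean : ∫ x in a..b, (2 / c - g x / c ^ 2) = (b - a) ^ 2 / I := by
    rw [intervalIntegral.integral_sub intervalIntegrable_const
      ((hg.intervalIntegrable_of_Icc hab.le).div_const _), intervalIntegral.integral_const,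
      intervalIntegral.integral_div, smul_eq_mul, ← hI_def]
    simp only [c]
    field_simp
    ring
  rwa [hmean, div_lt_iff₀' hI] at hlt

lemma exp_neg_div_eq_inv (x D : ℝ) : Real.exp (-x / D) = (Real.exp (x / D))⁻¹ := by
  rw [neg_div, Real.exp_neg]

theorem sq_sub_lt_integral_exp_neg_div_mul_integral_exp_div {Q : ℝ → ℝ} {D a b : ℝ}
    (hD : D ≠ 0) (hab : a < b) (hQ : Continuous Q)
    (hQnc : ∃ x ∈ Icc a b, ∃ y ∈ Icc a b, Q x ≠ Q y) :
    (b - a) ^ 2 < (∫ y in a..b, Real.exp (-Q y / D)) * ∫ y in a..b, Real.exp (Q y / D) := by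
  obtain ⟨x, hx, y, hy, hxy⟩ := hQnc
  have hexp_nc : ∃ x ∈ Icc a b, ∃ y ∈ Icc a b, Real.exp (Q x / D) ≠ Real.exp (Q y / D) :=
    ⟨x, hx, y, hy, fun h => hxy ((div_left_inj' hD).1 (Real.exp_injective h))⟩
  rw [mul_comm]
  have hexp : Continuous fun y => Real.exp (Q y / D) := by fun_prop
  simpa only [exp_neg_div_eq_inv] using
    sq_sub_lt_integral_mul_integral_inv hab hexp.continuousOn (fun y _ => Real.exp_pos _) hexp_nc

lemma integral_mul_exp_neg_div_of_eq {f Q : ℝ → ℝ} {D k a b : ℝ}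
    (hf : ∀ y, f y = k * Real.exp (Q y / D)) :
    ∫ y in a..b, f y * Real.exp (-Q y / D) = k * (b - a) := by
  simp only [hf, exp_neg_div_eq_inv, mul_inv_cancel_right₀ (Real.exp_pos _).ne',
    intervalIntegral.integral_const, smul_eq_mul]
  ring

lemma integral_sq_mul_exp_neg_div_of_eq {f Q : ℝ → ℝ} {D k a b : ℝ}
    (hf : ∀ y, f y = k * Real.exp (Q y / D)) :
    ∫ y in a..b, f y ^ 2 * Real.exp (-Q y / D) = k ^ 2 * ∫ y in a..b, Real.exp (Q y / D) := by
  simp only [hf, exp_neg_div_eq_inv, mul_pow, mul_assoc, sq (Real.exp _),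
    mul_inv_cancel_right₀ (Real.exp_pos _).ne', intervalIntegral.integral_const_mul]

theorem averaged_dispersion_mismatch_general (D lam : ℝ) (hD : 0 < D) (hlam : 0 < lam)
    (Q : ℝ → ℝ) (hQ : ContDiff ℝ 2 Q)
    (hQnc : ¬ (∀ x ∈ Set.Icc (0:ℝ) lam, ∀ y ∈ Set.Icc (0:ℝ) lam, Q x = Q y))
    (L Lhat : ℝ)
    (hL : L = ∫ y in (0:ℝ)..lam, Real.exp (-Q y / D))
    (hLhat : Lhat = ∫ y in (0:ℝ)..lam, Real.exp (Q y / D))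
    (χ : ℝ → ℝ)
    (hχ' : ∀ y, 1 + deriv χ y = (lam / Lhat) * Real.exp (Q y / D))
    (Phibar qeff : ℝ)
    (hPhibar : Phibar = Real.sqrt (2 * D) *
      ((1 / L) * ∫ y in (0:ℝ)..lam, (1 + deriv χ y) * Real.exp (-Q y / D)))
    (hqeff : qeff = 2 * D *
      ((1 / L) * ∫ y in (0:ℝ)..lam, (1 + deriv χ y) ^ 2 * Real.exp (-Q y / D))) :
    qeff = 2 * D * lam ^ 2 / (L * Lhat) ∧
    Phibar ^ 2 < qeff := by
  push Not at hQnc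
  have hCS : lam ^ 2 < L * Lhat := by
    simpa only [sub_zero, ← hL, ← hLhat] using
      sq_sub_lt_integral_exp_neg_div_mul_integral_exp_div hD.ne' hlam hQ.continuous hQnc
  have hLhat_pos : 0 < Lhat := hLhat ▸ intervalIntegral.integral_pos hlam
    (Real.continuous_exp.comp (hQ.continuous.div_const D)).continuousOn
    (fun y _ => (Real.exp_pos _).le) ⟨0, left_mem_Icc.2 hlam.le, Real.exp_pos _⟩
  have hL_pos : 0 < L := pos_of_mul_pos_left (hCS.trans' (by positivity)) hLhat_pos.le
  have hmean := integral_mul_exp_neg_div_of_eq (a := 0) (b := lam) hχ'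
  have hmean_sq := integral_sq_mul_exp_neg_div_of_eq (a := 0) (b := lam) hχ'
  rw [sub_zero] at hmean
  rw [← hLhat] at hmean_sq
  have hq : qeff = 2 * D * lam ^ 2 / (L * Lhat) := by
    rw [hqeff, hmean_sq]
    field_simp
  refine ⟨hq, ?_⟩
  have hratio : lam ^ 2 / (L * Lhat) < 1 := (div_lt_one (by positivity)).2 hCS
  calc Phibar ^ 2 = 2 * D * lam ^ 2 / (L * Lhat) * (lam ^ 2 / (L * Lhat)) := by
        rw [hPhibar, hmean, mul_pow, Real.sq_sqrt (by positivity)]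
        field_simp
    _ < 2 * D * lam ^ 2 / (L * Lhat) := mul_lt_of_lt_one_right (by positivity) hratio
    _ = qeff := hq.symm

/-- For nonconstant `Q`, the averaged dispersion
`Φ̄ = √(2D) ∫_0^λ (1+χ'(y)) μ(dy)` satisfies `Φ̄² < q`, where
`q = 2D ∫_0^λ (1+χ')² dμ = 2Dλ²/(L L̂)`; hence the averaged dispersion cannot
satisfy `Φ̄² = q`. -/
theorem averaged_dispersion_mismatch (D lam : ℝ) (hD : 0 < D) (hlam : 0 < lam)
    (Q : ℝ → ℝ) (hQ : ContDiff ℝ 2 Q) (hQper : ∀ y, Q (y + lam) = Q y)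
    (hQnc : ¬ (∀ x ∈ Set.Icc (0:ℝ) lam, ∀ y ∈ Set.Icc (0:ℝ) lam, Q x = Q y))
    (L Lhat : ℝ)
    (hL : L = ∫ y in (0:ℝ)..lam, Real.exp (-Q y / D))
    (hLhat : Lhat = ∫ y in (0:ℝ)..lam, Real.exp (Q y / D))
    (χ : ℝ → ℝ)
    (hχ' : ∀ y, 1 + deriv χ y = (lam / Lhat) * Real.exp (Q y / D))
    (Phibar qeff : ℝ)
    (hPhibar : Phibar = Real.sqrt (2 * D) *
      ((1 / L) * ∫ y in (0:ℝ)..lam, (1 + deriv χ y) * Real.exp (-Q y / D)))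
    (hqeff : qeff = 2 * D *
      ((1 / L) * ∫ y in (0:ℝ)..lam, (1 + deriv χ y) ^ 2 * Real.exp (-Q y / D))) :
    qeff = 2 * D * lam ^ 2 / (L * Lhat) ∧
    Phibar ^ 2 < qeff :=
  averaged_dispersion_mismatch_general D lam hD hlam Q hQ hQnc L Lhat hL hLhat χ hχ' Phibar qeff
    hPhibar hqeff
end

section
/- Let D > 0, κ > 0, T > 0 and h(x) = (|x| − 1)². Define A(t) = (1 + 2D)e^{2κT} − 2De^{2κt} and G(t,x) = (e^{κT} − |x| e^{κt})² / A(t) for (t,x) ∈ [0,T] × ℝ. Then: (i) A(t) > 0 for all t ∈ [0,T]; (ii) G(T,x) = h(x) for all x ∈ ℝ; and (iii) for every (t,x) ∈ (0,T) × ℝ with x ≠ 0, G is differentiable at (t,x) and satisfies the HJB equation G_t(t,x) − κ x G_x(t,x) − κ D (G_x(t,x))² = 0. -/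
/-- The explicit function `G(t,x) = (e^{κT} − |x|e^{κt})²/A(t)`, with
`A(t) = (1+2D)e^{2κT} − 2De^{2κt}`, satisfies `A > 0` on `[0,T]`, the terminal
condition `G(T,x) = (|x|−1)²`, and, away from the interface `x = 0`, the HJB
equation `G_t − κxG_x − κD G_x² = 0`. -/
theorem explicit_HJB_solution (D kappa T : ℝ) (hD : 0 < D) (hk : 0 < kappa)
    (hT : 0 < T)
    (h : ℝ → ℝ) (hh : ∀ x, h x = (|x| - 1) ^ 2)
    (A : ℝ → ℝ)
    (hA : ∀ t, A t = (1 + 2 * D) * Real.exp (2 * kappa * T)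
      - 2 * D * Real.exp (2 * kappa * t))
    (G : ℝ → ℝ → ℝ)
    (hG : ∀ t x, G t x = (Real.exp (kappa * T) - |x| * Real.exp (kappa * t)) ^ 2 / A t) :
    (∀ t ∈ Set.Icc (0:ℝ) T, 0 < A t) ∧
    (∀ x : ℝ, G T x = h x) ∧
    (∀ t ∈ Set.Ioo (0:ℝ) T, ∀ x : ℝ, x ≠ 0 →
      DifferentiableAt ℝ (fun p : ℝ × ℝ => G p.1 p.2) (t, x) ∧
      deriv (fun τ => G τ x) t - kappa * x * deriv (fun y => G t y) x
        - kappa * D * (deriv (fun y => G t y) x) ^ 2 = 0) := by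
  have hApos : ∀ t ∈ Set.Icc (0:ℝ) T, 0 < A t := by
    intro t ht
    rw [hA]
    have h1 : Real.exp (2 * kappa * t) ≤ Real.exp (2 * kappa * T) := by
      apply Real.exp_le_exp.2
      nlinarith [ht.2]
    nlinarith [Real.exp_pos (2 * kappa * T)]
  refine ⟨hApos, ?_, ?_⟩
  · intro x
    rw [hG, hA, hh]
    have hE2 : Real.exp (2 * kappa * T) = Real.exp (kappa * T) * Real.exp (kappa * T) := by
      rw [← Real.exp_add]; ring_nf
    have hEpos := Real.exp_pos (kappa * T)
    rw [hE2, div_eq_iff (by nlinarith)]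
    ring
  · intro t ht x hx
    -- set up sign
    obtain ⟨s, hs, habs⟩ : ∃ s : ℝ, (s = 1 ∨ s = -1) ∧ ∀ᶠ y in nhds x, |y| = s * y := by
      rcases hx.lt_or_gt with hneg | hpos
      · exact ⟨-1, Or.inr rfl, by
          filter_upwards [eventually_lt_nhds hneg] with y hy
          rw [abs_of_neg hy]; ring⟩
      · exact ⟨1, Or.inl rfl, by
          filter_upwards [eventually_gt_nhds hpos] with y hy
          rw [abs_of_pos hy]; ring⟩
    have hsx : s * x = |x| := by
      rcases hx.lt_or_gt with hneg | hpos
      · rcases hs with rfl | rfl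
        · exfalso
          have := habs.self_of_nhds
          rw [abs_of_neg hneg] at this; nlinarith
        · rw [abs_of_neg hneg]; ring
      · rcases hs with rfl | rfl
        · rw [abs_of_pos hpos]; ring
        · exfalso
          have := habs.self_of_nhds
          rw [abs_of_pos hpos] at this; nlinarith
    have hAt : 0 < A t := hApos t ⟨ht.1.le, ht.2.le⟩
    have hAtne : ((1 + 2 * D) * Real.exp (2 * kappa * T)
        - 2 * D * Real.exp (2 * kappa * t)) ≠ 0 := by rw [← hA]; exact hAt.ne'
    set ET := Real.exp (kappa * T) with hET
    set et := Real.exp (kappa * t) with het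
    -- joint differentiability
    have hdiff : DifferentiableAt ℝ (fun p : ℝ × ℝ => G p.1 p.2) (t, x) := by
      have hev : (fun p : ℝ × ℝ => G p.1 p.2) =ᶠ[nhds (t, x)]
          (fun p : ℝ × ℝ => (ET - s * p.2 * Real.exp (kappa * p.1)) ^ 2 /
            ((1 + 2 * D) * Real.exp (2 * kappa * T) - 2 * D * Real.exp (2 * kappa * p.1))) := by
        have h2 : ∀ᶠ p : ℝ × ℝ in nhds (t, x), |p.2| = s * p.2 :=
          (continuous_snd.tendsto (t, x)).eventually habs
        filter_upwards [h2] with p hp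
        rw [hG, hA, hp]
      rw [hev.differentiableAt_iff]
      have d1 : DifferentiableAt ℝ (fun p : ℝ × ℝ =>
          (ET - s * p.2 * Real.exp (kappa * p.1)) ^ 2) (t, x) := by fun_prop
      have d2 : DifferentiableAt ℝ (fun p : ℝ × ℝ =>
          (1 + 2 * D) * Real.exp (2 * kappa * T) - 2 * D * Real.exp (2 * kappa * p.1))
          (t, x) := by fun_prop
      simp only [div_eq_mul_inv]
      exact d1.mul (d2.inv hAtne)
    refine ⟨hdiff, ?_⟩
    -- time derivative
    have htfun : (fun τ => G τ x) = fun τ =>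
        (ET - |x| * Real.exp (kappa * τ)) ^ 2 /
          ((1 + 2 * D) * Real.exp (2 * kappa * T) - 2 * D * Real.exp (2 * kappa * τ)) := by
      funext τ; rw [hG, hA]
    have hexp : HasDerivAt (fun τ => Real.exp (kappa * τ)) (et * kappa) t := by
      simpa using ((hasDerivAt_id t).const_mul kappa).exp
    have hexp2 : HasDerivAt (fun τ => Real.exp (2 * kappa * τ))
        (Real.exp (2 * kappa * t) * (2 * kappa)) t := by
      simpa using ((hasDerivAt_id t).const_mul (2 * kappa)).exp
    have hnum : HasDerivAt (fun τ => (ET - |x| * Real.exp (kappa * τ)) ^ 2)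
        (2 * (ET - |x| * et) ^ 1 * (0 - |x| * (et * kappa))) t := by
      exact (((hasDerivAt_const t ET).sub (hexp.const_mul |x|)).pow 2)
    have hden : HasDerivAt (fun τ =>
        (1 + 2 * D) * Real.exp (2 * kappa * T) - 2 * D * Real.exp (2 * kappa * τ))
        (0 - 2 * D * (Real.exp (2 * kappa * t) * (2 * kappa))) t := by
      exact (hasDerivAt_const t _).sub (hexp2.const_mul (2 * D))
    have hGt : HasDerivAt (fun τ => G τ x)
        ((2 * (ET - |x| * et) ^ 1 * (0 - |x| * (et * kappa)) *
            ((1 + 2 * D) * Real.exp (2 * kappa * T) - 2 * D * Real.exp (2 * kappa * t))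
          - (ET - |x| * et) ^ 2 *
            (0 - 2 * D * (Real.exp (2 * kappa * t) * (2 * kappa)))) /
          ((1 + 2 * D) * Real.exp (2 * kappa * T) - 2 * D * Real.exp (2 * kappa * t)) ^ 2) t := by
      rw [htfun]
      exact hnum.div hden hAtne
    -- space derivative
    have hxev : (fun y => G t y) =ᶠ[nhds x]
        (fun y => (ET - s * y * et) ^ 2 /
          ((1 + 2 * D) * Real.exp (2 * kappa * T) - 2 * D * Real.exp (2 * kappa * t))) := by
      filter_upwards [habs] with y hy
      rw [hG, hA, hy]
    have hGx' : HasDerivAt (fun y => (ET - s * y * et) ^ 2 /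
          ((1 + 2 * D) * Real.exp (2 * kappa * T) - 2 * D * Real.exp (2 * kappa * t)))
        ((2 * (ET - s * x * et) ^ 1 * (0 - s * 1 * et)) /
          ((1 + 2 * D) * Real.exp (2 * kappa * T) - 2 * D * Real.exp (2 * kappa * t))) x := by
      exact (((hasDerivAt_const x ET).sub
        (((hasDerivAt_id x).const_mul s).mul_const et)).pow 2).div_const _
    have hGxd : deriv (fun y => G t y) x =
        (2 * (ET - s * x * et) ^ 1 * (0 - s * 1 * et)) /
          ((1 + 2 * D) * Real.exp (2 * kappa * T) - 2 * D * Real.exp (2 * kappa * t)) := by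
      rw [hxev.deriv_eq]
      exact hGx'.deriv
    rw [hGt.deriv, hGxd]
    have he2 : Real.exp (2 * kappa * t) = et * et := by
      rw [het, ← Real.exp_add]; ring_nf
    rw [he2] at hAtne ⊢
    rw [← hsx]
    field_simp
    rcases hs with rfl | rfl <;> ring
end

section
/- Let D > 0, κ > 0, T > 0, q = 2Dκ, and h(x) = (|x| − 1)². For every t ∈ [0,T) and x ∈ ℝ, the infimum over all continuously differentiable paths φ : [t,T] → ℝ with φ(t) = x of the quantity (1/(2q)) ∫_t^T (φ'(s) + κ φ(s))² ds + h(φ(T)) equals G(t,x) = (e^{κT} − |x| e^{κt})² / ((1 + 2D)e^{2κT} − 2De^{2κt}). -/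
/-!
Write `ψ(s) = φ(s) e^{κs}`, so that `φ' + κφ = ψ' e^{-κs}`. For every constant `c`,
`(φ' + κφ)² ≥ 2c ψ' - c² e^{2κs}` (complete the square against `c e^{κs}`), and the right side
has an explicit antiderivative; integrating and optimising over `c` gives the sharp bound
`∫ (φ' + κφ)² ≥ 2κ (ψ(T) - ψ(t))² / (e^{2κT} - e^{2κt})`, attained by the paths
`α e^{-κs} + β e^{κs}`. What remains is a one-variable problem in the endpoint `y = φ(T)`,
solved by a weighted Cauchy–Schwarz inequality after replacing `y` by `|y|`.
-/

open MeasureTheory Real Set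

theorem hasDerivAt_exp_const_mul (c s : ℝ) :
    HasDerivAt (fun u => exp (c * u)) (c * exp (c * s)) s := by
  simpa [mul_comm] using ((hasDerivAt_id s).const_mul c).exp

theorem exp_two_mul_mul (κ s : ℝ) : exp (2 * κ * s) = exp (κ * s) ^ 2 := by
  rw [← exp_nat_mul]; ring_nf

section

variable {κ t T : ℝ} {φ φ' : ℝ → ℝ}

theorem sub_le_integral_sq_deriv_add_mul (hκ : κ ≠ 0) (htT : t ≤ T)
    (hφ : ∀ s ∈ Icc t T, HasDerivAt φ (φ' s) s) (hφ' : ContinuousOn φ' (Icc t T)) (c : ℝ) :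
    2 * c * (φ T * exp (κ * T) - φ t * exp (κ * t))
        - c ^ 2 * (exp (2 * κ * T) - exp (2 * κ * t)) / (2 * κ)
      ≤ ∫ s in t..T, (φ' s + κ * φ s) ^ 2 := by
  have hφc : ContinuousOn φ (Icc t T) := fun s hs => (hφ s hs).continuousAt.continuousWithinAt
  set F : ℝ → ℝ := fun s => 2 * c * (φ s * exp (κ * s)) - c ^ 2 * exp (2 * κ * s) / (2 * κ)
  have hF : ∀ s ∈ Icc t T,
      HasDerivAt F (2 * c * ((φ' s + κ * φ s) * exp (κ * s)) - c ^ 2 * exp (2 * κ * s)) s := by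
    intro s hs
    refine ((((hφ s hs).fun_mul (hasDerivAt_exp_const_mul κ s)).const_mul (2 * c)).fun_sub
      (((hasDerivAt_exp_const_mul (2 * κ) s).const_mul (c ^ 2)).div_const (2 * κ))).congr_deriv ?_
    field_simp
  have hdom : ∀ s, 2 * c * ((φ' s + κ * φ s) * exp (κ * s)) - c ^ 2 * exp (2 * κ * s)
      ≤ (φ' s + κ * φ s) ^ 2 := fun s => by
    rw [exp_two_mul_mul]
    nlinarith [sq_nonneg (φ' s + κ * φ s - c * exp (κ * s))]
  have hint : IntegrableOn (fun s => (φ' s + κ * φ s) ^ 2) (Icc t T) :=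
    ((hφ'.add (continuousOn_const.mul hφc)).pow 2).integrableOn_Icc
  have := intervalIntegral.sub_le_integral_of_hasDeriv_right_of_le htT
    (fun s hs => (hF s hs).continuousAt.continuousWithinAt)
    (fun s hs => (hF s (Ioo_subset_Icc_self hs)).hasDerivWithinAt)
    hint (fun s _ => hdom s)
  convert this using 1
  simp only [F]
  ring

theorem isLeast_integral_sq_deriv_add_mul (hκ : κ ≠ 0) (htT : t < T) (x y : ℝ) :
    IsLeast {E | ∃ φ φ' : ℝ → ℝ, (∀ s ∈ Icc t T, HasDerivAt φ (φ' s) s) ∧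
        ContinuousOn φ' (Icc t T) ∧ φ t = x ∧ φ T = y ∧ E = ∫ s in t..T, (φ' s + κ * φ s) ^ 2}
      (2 * κ * (y * exp (κ * T) - x * exp (κ * t)) ^ 2 / (exp (2 * κ * T) - exp (2 * κ * t))) := by
  have hW : exp (2 * κ * T) - exp (2 * κ * t) ≠ 0 := by
    rw [sub_ne_zero, Ne, exp_eq_exp]
    exact fun h => htT.ne (mul_left_cancel₀ (mul_ne_zero two_ne_zero hκ) h).symm
  constructor
  · set β := (y * exp (κ * T) - x * exp (κ * t)) / (exp (2 * κ * T) - exp (2 * κ * t))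
    set α := x * exp (κ * t) - β * exp (2 * κ * t)
    have hφ : ∀ s, HasDerivAt (fun u => α * exp (-κ * u) + β * exp (κ * u))
        (α * (-κ * exp (-κ * s)) + β * (κ * exp (κ * s))) s := fun s =>
      ((hasDerivAt_exp_const_mul (-κ) s).const_mul α).add
        ((hasDerivAt_exp_const_mul κ s).const_mul β)
    have hexp_neg : ∀ s, exp (-κ * s) = (exp (κ * s))⁻¹ := fun s => by
      rw [neg_mul, exp_neg]
    -- along this path `φ' + κφ = 2κβ e^{κs}`, the equality case of the pointwise bound
    have hE : ∀ s, HasDerivAt (fun u => 2 * κ * β ^ 2 * exp (2 * κ * u))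
        ((α * (-κ * exp (-κ * s)) + β * (κ * exp (κ * s))
          + κ * (α * exp (-κ * s) + β * exp (κ * s))) ^ 2) s := fun s => by
      refine ((hasDerivAt_exp_const_mul (2 * κ) s).const_mul (2 * κ * β ^ 2)).congr_deriv ?_
      rw [exp_two_mul_mul]
      ring
    refine ⟨_, _, fun s _ => hφ s, by fun_prop, ?_, ?_, ?_⟩
    · simp only [hexp_neg, α, exp_two_mul_mul]
      field_simp
      ring
    · simp only [hexp_neg, α, β, exp_two_mul_mul] at hW ⊢
      field_simp
      ring
    · rw [intervalIntegral.integral_eq_sub_of_hasDerivAt (fun s _ => hE s)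
        (Continuous.intervalIntegrable (by fun_prop) t T)]
      simp only [β]
      field_simp
  · rintro _ ⟨φ, φ', hφ, hφ', rfl, rfl, rfl⟩
    convert sub_le_integral_sq_deriv_add_mul hκ htT.le hφ hφ'
      (2 * κ * (φ T * exp (κ * T) - φ t * exp (κ * t)) / (exp (2 * κ * T) - exp (2 * κ * t)))
      using 1
    field_simp
    ring

end

theorem isLeast_div_add_sq_abs_sub_one {A e M : ℝ} (hA : 0 ≤ A) (he : 0 ≤ e) (hM : 0 < M)
    (x : ℝ) :
    IsLeast (range fun y => (y * A - x * e) ^ 2 / M + (|y| - 1) ^ 2)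
      ((A - |x| * e) ^ 2 / (A ^ 2 + M)) := by
  have hAM : 0 < A ^ 2 + M := by positivity
  set u := (|x| * e * A + M) / (A ^ 2 + M)
  have hu0 : 0 ≤ u := by positivity
  have hvalue : (u * A - |x| * e) ^ 2 / M + (u - 1) ^ 2 = (A - |x| * e) ^ 2 / (A ^ 2 + M) := by
    simp only [u]; field_simp; ring
  constructor
  · rcases le_or_gt 0 x with hx | hx
    · refine ⟨u, ?_⟩
      dsimp only
      rw [abs_of_nonneg hu0, ← hvalue, abs_of_nonneg hx]
    · refine ⟨-u, ?_⟩
      dsimp only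
      rw [abs_neg, abs_of_nonneg hu0, ← hvalue, abs_of_neg hx]
      ring
  · rintro _ ⟨y, rfl⟩
    -- weighted Cauchy–Schwarz `(p - A r)² ≤ (p²/M + r²)(A² + M)` at `p = |y|A - |x|e`, `r = |y| - 1`
    have hcs : (A - |x| * e) ^ 2 / (A ^ 2 + M) ≤ (|y| * A - |x| * e) ^ 2 / M + (|y| - 1) ^ 2 := by
      rw [div_le_iff₀ hAM]
      have key : ((|y| * A - |x| * e) ^ 2 / M + (|y| - 1) ^ 2) * (A ^ 2 + M) - (A - |x| * e) ^ 2
          = ((|y| * A - |x| * e) * A + (|y| - 1) * M) ^ 2 / M := by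
        field_simp; ring
      have : 0 ≤ ((|y| * A - |x| * e) * A + (|y| - 1) * M) ^ 2 / M := by positivity
      linarith
    have habs : (|y| * A - |x| * e) ^ 2 ≤ (y * A - x * e) ^ 2 := by
      have : x * y ≤ |x| * |y| := by rw [← abs_mul]; exact le_abs_self _
      linear_combination 2 * mul_nonneg (mul_nonneg hA he) (sub_nonneg.2 this)
        + A ^ 2 * sq_abs y + e ^ 2 * sq_abs x
    calc (A - |x| * e) ^ 2 / (A ^ 2 + M) ≤ _ := hcs
      _ ≤ (y * A - x * e) ^ 2 / M + (|y| - 1) ^ 2 := by gcongr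

theorem explicit_variational_value_general (D kappa T : ℝ) (hD : 0 < D) (hk : 0 < kappa)
    (q : ℝ) (hq : q = 2 * D * kappa)
    (h : ℝ → ℝ) (hh : ∀ x, h x = (|x| - 1) ^ 2)
    (t x : ℝ) (htT : t < T) :
    IsGLB {v : ℝ | ∃ φ φ' : ℝ → ℝ,
        (∀ s ∈ Set.Icc t T, HasDerivAt φ (φ' s) s) ∧
        ContinuousOn φ' (Set.Icc t T) ∧ φ t = x ∧
        v = (1 / (2 * q)) * (∫ s in t..T, (φ' s + kappa * φ s) ^ 2) + h (φ T)}
      ((Real.exp (kappa * T) - |x| * Real.exp (kappa * t)) ^ 2 /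
        ((1 + 2 * D) * Real.exp (2 * kappa * T) - 2 * D * Real.exp (2 * kappa * t))) := by
  have hW : 0 < exp (2 * kappa * T) - exp (2 * kappa * t) :=
    sub_pos.2 (exp_lt_exp.2 (by nlinarith))
  set M := 2 * D * (exp (2 * kappa * T) - exp (2 * kappa * t))
  have hM : 0 < M := by positivity
  have hcost : ∀ y, 1 / (2 * q) * (2 * kappa * (y * exp (kappa * T) - x * exp (kappa * t)) ^ 2
      / (exp (2 * kappa * T) - exp (2 * kappa * t))) + h y
      = (y * exp (kappa * T) - x * exp (kappa * t)) ^ 2 / M + (|y| - 1) ^ 2 := fun y => by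
    rw [hh, hq]
    simp only [M]
    field_simp
  have hden : (1 + 2 * D) * exp (2 * kappa * T) - 2 * D * exp (2 * kappa * t)
      = exp (kappa * T) ^ 2 + M := by
    rw [← exp_two_mul_mul]; ring
  obtain ⟨⟨y, hy⟩, hlow⟩ := isLeast_div_add_sq_abs_sub_one (exp_pos (kappa * T)).le
    (exp_pos (kappa * t)).le hM x
  rw [hden]
  refine IsLeast.isGLB ⟨?_, ?_⟩
  · obtain ⟨φ, φ', hφ, hφ', hφt, hφT, hE⟩ := (isLeast_integral_sq_deriv_add_mul hk.ne' htT x y).1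
    exact ⟨φ, φ', hφ, hφ', hφt, by rw [← hE, hφT, hcost]; exact hy.symm⟩
  · rintro _ ⟨φ, φ', hφ, hφ', hφt, rfl⟩
    have hE := (isLeast_integral_sq_deriv_add_mul hk.ne' htT x (φ T)).2
      ⟨φ, φ', hφ, hφ', hφt, rfl, rfl⟩
    have hq0 : 0 ≤ 1 / (2 * q) := by rw [hq]; positivity
    calc _ ≤ _ := hlow ⟨φ T, rfl⟩
      _ = _ := (hcost (φ T)).symm
      _ ≤ _ := by gcongr

/-- The value of the calculus of variations problem
`inf_{φ(t)=x} [(1/(2q))∫_t^T (φ' + κφ)² ds + h(φ(T))]` with `q = 2Dκ` and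
`h(x) = (|x|−1)²` equals
`G(t,x) = (e^{κT} − |x|e^{κt})²/((1+2D)e^{2κT} − 2De^{2κt})`. -/
theorem explicit_variational_value (D kappa T : ℝ) (hD : 0 < D) (hk : 0 < kappa)
    (hT : 0 < T) (q : ℝ) (hq : q = 2 * D * kappa)
    (h : ℝ → ℝ) (hh : ∀ x, h x = (|x| - 1) ^ 2)
    (t x : ℝ) (ht : 0 ≤ t) (htT : t < T) :
    IsGLB {v : ℝ | ∃ φ φ' : ℝ → ℝ,
        (∀ s ∈ Set.Icc t T, HasDerivAt φ (φ' s) s) ∧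
        ContinuousOn φ' (Set.Icc t T) ∧ φ t = x ∧
        v = (1 / (2 * q)) * (∫ s in t..T, (φ' s + kappa * φ s) ^ 2) + h (φ T)}
      ((Real.exp (kappa * T) - |x| * Real.exp (kappa * t)) ^ 2 /
        ((1 + 2 * D) * Real.exp (2 * kappa * T) - 2 * D * Real.exp (2 * kappa * t))) :=
  explicit_variational_value_general D kappa T hD hk q hq h hh t x htT
end
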